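/- With the setup of the execution-risk recursion (Markov chain with transitions T, failure probabilities r̃, safe transitions T̃(s,s') = T(s,s')(1 − r̃(s))), define the safe-reachability measure x(s₀, 0) = 1 and x(s, k) = Σ_{s'} x(s', k−1) T̃(s', s) for k ≥ 1. Then the execution risk from the initial state satisfies Er(s₀, 0) = r̃(s₀) + Σ_{k=1}^{h} Σ_{s} x(s, k) · r̃(s), i.e., the total failure probability is a linear function of the flow variables x. -/

import Mathlib

/-!
Attaching each survival factor `1 - r̃ s` to the transition that leaves `s` writes the weight of a
safe path as `pathProb (safeT T r)` times the survival factor of its endpoint. Splitting off the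
last step of a path shows that the flow `x(·, n)` is the law of the state at time `n` on the runs
that have not failed before `n`, so the survival probability up to the horizon is
`Σ_s x(s, h) (1 - r̃ s)`. Since `T` is stochastic, the mass of `x(·, k + 1)` is the survival mass
`Σ_s x(s, k) (1 - r̃ s)` at time `k`, so the survival probability telescopes to
`1 - Σ_{k ≤ h} Σ_s x(s, k) r̃ s`.
-/
open Finset

variable {S : Type*} [Fintype S] [DecidableEq S]

/-- Probability of a trajectory of length `n` under transition kernel `T`. -/
def pathProb (T : S → S → ℝ) {n : ℕ} (p : Fin (n + 1) → S) : ℝ :=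
  ∏ t : Fin n, T (p t.castSucc) (p t.succ)

/-- Probability that no failure occurs along a trajectory. -/
def pathSafe (r : S → ℝ) {n : ℕ} (p : Fin (n + 1) → S) : ℝ :=
  ∏ t : Fin (n + 1), (1 - r (p t))

/-- Execution risk: probability that some failure occurs at a time in
`{k, …, h}` given state `s` at time `k`. -/
def execRisk (T : S → S → ℝ) (r : S → ℝ) (h k : ℕ) (s : S) : ℝ :=
  1 - ∑ p : Fin (h - k + 1) → S,
        (if p 0 = s then pathProb T p * pathSafe r p else 0)

/-- The safe transition kernel `T̃(s,s') = T(s,s')(1 − r̃(s))`. -/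
def safeT (T : S → S → ℝ) (r : S → ℝ) (s s' : S) : ℝ :=
  T s s' * (1 - r s)

/-- The safe-reachability flow: `x(s₀,0) = 1` and
`x(s,k) = Σ_{s'} x(s',k−1) T̃(s',s)`. -/
def flow (T : S → S → ℝ) (r : S → ℝ) (s₀ : S) : ℕ → S → ℝ
  | 0, s => if s = s₀ then 1 else 0
  | k + 1, s => ∑ s', flow T r s₀ k s' * safeT T r s' s

omit [Fintype S] [DecidableEq S] in
theorem pathProb_snoc (K : S → S → ℝ) {n : ℕ} (q : Fin (n + 1) → S) (s : S) :
    pathProb K (Fin.snoc q s : Fin (n + 2) → S) = pathProb K q * K (q (Fin.last n)) s := by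
  simp only [pathProb, Fin.prod_univ_castSucc, Fin.succ_castSucc, Fin.snoc_castSucc,
    Fin.succ_last, Fin.snoc_last]

omit [Fintype S] [DecidableEq S] in
theorem pathProb_mul_pathSafe (T : S → S → ℝ) (r : S → ℝ) {n : ℕ} (p : Fin (n + 1) → S) :
    pathProb T p * pathSafe r p = pathProb (safeT T r) p * (1 - r (p (Fin.last n))) := by
  rw [pathSafe, Fin.prod_univ_castSucc, ← mul_assoc, pathProb, pathProb, ← prod_mul_distrib]
  rfl

theorem sum_pathProb_fin_one (K : S → S → ℝ) (s₀ : S) (f : S → ℝ) :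
    ∑ p : Fin 1 → S, (if p 0 = s₀ then pathProb K p * f (p (Fin.last 0)) else 0) = f s₀ := by
  rw [← (Equiv.funUnique (Fin 1) S).symm.sum_comp]
  simp [pathProb]

theorem sum_pathProb_snoc (K : S → S → ℝ) (s₀ : S) (f : S → ℝ) (n : ℕ) :
    ∑ p : Fin (n + 2) → S, (if p 0 = s₀ then pathProb K p * f (p (Fin.last (n + 1))) else 0) =
      ∑ q : Fin (n + 1) → S,
        (if q 0 = s₀ then pathProb K q * ∑ s, K (q (Fin.last n)) s * f s else 0) := by
  rw [← (Fin.snocEquiv fun _ => S).sum_comp, Fintype.sum_prod_type, sum_comm]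
  refine sum_congr rfl fun q _ => ?_
  have snoc_zero : ∀ s, (Fin.snoc q s : Fin (n + 2) → S) 0 = q 0 := fun s =>
    Fin.snoc_castSucc (α := fun _ => S) (i := 0) ..
  dsimp only [Fin.snocEquiv, Equiv.coe_fn_mk]
  split_ifs with hq <;> simp [snoc_zero, hq, pathProb_snoc, mul_sum, mul_assoc]

section Flow

variable (T : S → S → ℝ) (r : S → ℝ) (s₀ : S)

theorem sum_flow_zero_mul (f : S → ℝ) : ∑ s, flow T r s₀ 0 s * f s = f s₀ := by
  simp [flow]

theorem sum_flow_mul_eq_sum_pathProb (n : ℕ) (f : S → ℝ) :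
    ∑ s, flow T r s₀ n s * f s =
      ∑ p : Fin (n + 1) → S,
        (if p 0 = s₀ then pathProb (safeT T r) p * f (p (Fin.last n)) else 0) := by
  induction n generalizing f with
  | zero => rw [sum_flow_zero_mul, sum_pathProb_fin_one]
  | succ n ih =>
    calc ∑ s, flow T r s₀ (n + 1) s * f s
        = ∑ s', flow T r s₀ n s' * ∑ s, safeT T r s' s * f s := by
          simp only [flow, sum_mul, mul_sum, mul_assoc]
          exact sum_comm
      _ = _ := by rw [ih, sum_pathProb_snoc]

variable {T} (hT1 : ∀ s, ∑ s', T s s' = 1)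
include hT1

theorem sum_flow_succ (k : ℕ) :
    ∑ s, flow T r s₀ (k + 1) s = ∑ s, flow T r s₀ k s * (1 - r s) := by
  simp only [flow, safeT]
  rw [sum_comm]
  refine sum_congr rfl fun s' _ => ?_
  simp only [← mul_assoc, mul_right_comm _ (T _ _), ← mul_sum, hT1, mul_one]

theorem sum_flow_mul_one_sub (n : ℕ) :
    ∑ s, flow T r s₀ n s * (1 - r s) =
      1 - (r s₀ + ∑ k ∈ Icc 1 n, ∑ s, flow T r s₀ k s * r s) := by
  induction n with
  | zero => simp [sum_flow_zero_mul]
  | succ n ih =>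
    calc ∑ s, flow T r s₀ (n + 1) s * (1 - r s)
        = ∑ s, flow T r s₀ (n + 1) s - ∑ s, flow T r s₀ (n + 1) s * r s := by
          simp only [mul_one_sub, sum_sub_distrib]
      _ = ∑ s, flow T r s₀ n s * (1 - r s) - ∑ s, flow T r s₀ (n + 1) s * r s := by
          rw [sum_flow_succ r s₀ hT1]
      _ = _ := by
          rw [ih, sum_Icc_succ_top (by omega)]
          ring

end Flow

theorem execRisk_linear_in_flow_general
    (T : S → S → ℝ) (r : S → ℝ) (s₀ : S) (h : ℕ)
    (hT1 : ∀ s, ∑ s', T s s' = 1) :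
    execRisk T r h 0 s₀ =
      r s₀ + ∑ k ∈ Finset.Icc 1 h, ∑ s, flow T r s₀ k s * r s := by
  rw [execRisk]
  simp only [pathProb_mul_pathSafe]
  rw [← sum_flow_mul_eq_sum_pathProb T r s₀ (h - 0) (fun s => 1 - r s), Nat.sub_zero,
    sum_flow_mul_one_sub r s₀ hT1, sub_sub_cancel]

/-- The execution risk from the initial state is the linear function
`Er(s₀,0) = r̃(s₀) + Σ_{k=1}^{h} Σ_{s} x(s,k) · r̃(s)` of the flow variables. -/
theorem execRisk_linear_in_flow
    (T : S → S → ℝ) (r : S → ℝ) (s₀ : S) (h : ℕ)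
    (hT0 : ∀ s s', 0 ≤ T s s') (hT1 : ∀ s, ∑ s', T s s' = 1)
    (hr0 : ∀ s, 0 ≤ r s) (hr1 : ∀ s, r s ≤ 1) :
    execRisk T r h 0 s₀ =
      r s₀ + ∑ k ∈ Finset.Icc 1 h, ∑ s, flow T r s₀ k s * r s :=
  execRisk_linear_in_flow_general T r s₀ h hT1
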